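/- (Comparison of direct and two-segment continuum costs, Lemma C.2.) Let m̄, m̄′, j be pairwise distinct strategies. Let r ∈ D̄(e_{m̄}), α, β > 0, p = r + α(e_j − e_{m̄}), and q = r + (α+β)(e_{m̄′} − e_{m̄}) (equivalently q = p + α(e_{m̄′} − e_j) + β(e_{m̄′} − e_{m̄})), and assume π(m̄,p) = π(j,p), π(m̄,q) = π(j,q), and π(m̄,r) > π(j,r). Define c̄(r,q) = (1/2)(α+β)(π(m̄, r+q) − π(m̄′, r+q)), c̄(r,p) = (1/2)α(π(m̄, r+p) − π(j, r+p)), and c̄(p,q) = (1/2)(α+β)(π(m̄, p+q) − π(m̄′, p+q)). Then c̄(r,q) − [c̄(r,p) + c̄(p,q)] = (1/2)·α·(α+β)·(−A_{m̄j} + A_{m̄m̄′} + A_{jm̄} − A_{jm̄′} − A_{m̄′m̄} + A_{m̄′j}). In particular c̄(r,q) > c̄(r,p) + c̄(p,q) if and only if −A_{m̄j} + A_{m̄m̄′} + A_{jm̄} − A_{jm̄′} − A_{m̄′m̄} + A_{m̄′j} > 0. -/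
import Mathlib


open Finset

noncomputable section

/-- Expected payoff of strategy `i` at state `x`: `π(i,x) = ∑ j, A i j * x j`. -/
def pay {s : ℕ} (A : Fin s → Fin s → ℝ) (i : Fin s) (x : Fin s → ℝ) : ℝ :=
  ∑ j, A i j * x j

/-- The `i`-th standard basis vector `e_i` of `ℝ^s`. -/
def vertex {s : ℕ} (i : Fin s) : Fin s → ℝ := fun j => if j = i then 1 else 0

/-- The continuum simplex `Δ`. -/
def simplexC (s : ℕ) : Set (Fin s → ℝ) :=
  {p | (∀ i, 0 ≤ p i) ∧ (∑ i, p i) = 1}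

/-- The continuum basin of attraction `D̄(e_m)`. -/
def basinC {s : ℕ} (A : Fin s → Fin s → ℝ) (m : Fin s) : Set (Fin s → ℝ) :=
  {p | p ∈ simplexC s ∧ ∀ l, pay A m p ≥ pay A l p}


lemma pay_add' {s : ℕ} (A : Fin s → Fin s → ℝ) (i : Fin s) (x y : Fin s → ℝ) :
    pay A i (x + y) = pay A i x + pay A i y := by
  simp only [pay, Pi.add_apply, mul_add, Finset.sum_add_distrib]

lemma pay_shift {s : ℕ} (A : Fin s → Fin s → ℝ) (i a b : Fin s) (c : ℝ) (r : Fin s → ℝ) :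
    pay A i (fun h => r h + c * (vertex a h - vertex b h))
      = pay A i r + c * (A i a - A i b) := by
  simp only [pay]
  have h1 : ∀ h : Fin s, A i h * (r h + c * (vertex a h - vertex b h))
      = A i h * r h + c * (A i h * vertex a h) - c * (A i h * vertex b h) := by
    intro h; ring
  rw [Finset.sum_congr rfl fun h _ => h1 h, Finset.sum_sub_distrib, Finset.sum_add_distrib,
    ← Finset.mul_sum, ← Finset.mul_sum]
  simp [vertex, mul_ite, Finset.sum_ite_eq']
  ring

/-- **Comparison of direct and two-segment continuum costs (Lemma C.2).** -/
theorem direct_vs_two_segment_cost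
    (s : ℕ) (hs : 3 ≤ s)
    (A : Fin s → Fin s → ℝ)
    (m m' j : Fin s) (h₁ : m' ≠ m) (h₂ : j ≠ m) (h₃ : j ≠ m')
    (r : Fin s → ℝ) (hr : r ∈ basinC A m)
    (α β : ℝ) (hα : 0 < α) (hβ : 0 < β)
    (p q : Fin s → ℝ)
    (hpdef : p = fun h => r h + α * (vertex j h - vertex m h))
    (hqdef : q = fun h => r h + (α + β) * (vertex m' h - vertex m h))
    (hbp : pay A m p = pay A j p)
    (hbq : pay A m q = pay A j q)
    (hrstrict : pay A m r > pay A j r) :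
    ((1 / 2) * (α + β) * (pay A m (r + q) - pay A m' (r + q))
        - ((1 / 2) * α * (pay A m (r + p) - pay A j (r + p))
            + (1 / 2) * (α + β) * (pay A m (p + q) - pay A m' (p + q)))
      = (1 / 2) * α * (α + β)
          * (-(A m j) + A m m' + A j m - A j m' - A m' m + A m' j)) ∧
    ((1 / 2) * (α + β) * (pay A m (r + q) - pay A m' (r + q))
        > (1 / 2) * α * (pay A m (r + p) - pay A j (r + p))
            + (1 / 2) * (α + β) * (pay A m (p + q) - pay A m' (p + q))
      ↔ 0 < -(A m j) + A m m' + A j m - A j m' - A m' m + A m' j) := by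
  have hp := fun i => pay_shift A i j m α r
  have hq := fun i => pay_shift A i m' m (α+β) r
  rw [← hpdef] at hp
  rw [← hqdef] at hq
  rw [pay_add', pay_add', pay_add', pay_add', pay_add', pay_add'] at *
  rw [hp m, hp j, hp m', hq m, hq j, hq m'] at *
  have hαβ : 0 < α * (α + β) := mul_pos hα (by linarith)
  constructor
  · linear_combination (-(1/2) * α) * hbq + (-(1/2) * α) * hbp
  · constructor
    · intro h; nlinarith [hαβ]
    · intro h; nlinarith [hαβ]
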